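/- arXiv:0801.4088 — 2 statements merged into one kernel-verified Lean document; each statement's English description precedes it below -/
import Mathlib

section
/- With the notation of the estimate A(I_0): under the additional use of d(I,I_0) + d(C_{k_1}(I),I_0) ≳ 2^{k_1}|I| and |I_0| = 2^l|I| with l ≤ 0, one has A(I_0) ≲ 2^{−k_1 N min{θ_1,θ_3}}. -/
open Set

/-- The interval with center `c` and length `lam * L`. -/
noncomputable def dil (lam c L : ℝ) : Set ℝ := Set.Icc (c - lam * L / 2) (c + lam * L / 2)

/-- The scaled corona `C_k(I)` around the interval `I` of center `c` and length `L`. -/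
noncomputable def corona (k : ℕ) (c L : ℝ) : Set ℝ :=
  {x : ℝ | (2:ℝ)^k ≤ 1 + Metric.infDist x (dil 1 c L) / L ∧
    1 + Metric.infDist x (dil 1 c L) / L < (2:ℝ)^(k+1)}

/-- The distance between two subsets of `ℝ`. -/
noncomputable def setDist (E F : Set ℝ) : ℝ :=
  sInf ((fun p : ℝ × ℝ => dist p.1 p.2) '' (E ×ˢ F))

lemma mul3_le₁ (a b c d : ℝ) (ha0 : 0 ≤ a) (hab : a ≤ d) (hb0 : 0 ≤ b) (hb : b ≤ 1)
    (hc0 : 0 ≤ c) (hc : c ≤ 1) : a*b*c ≤ d := by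
  calc a*b*c ≤ a*b := mul_le_of_le_one_right (mul_nonneg ha0 hb0) hc
    _ ≤ a := mul_le_of_le_one_right ha0 hb
    _ ≤ d := hab

lemma mul3_le₂ (a b c d : ℝ) (ha0 : 0 ≤ a) (ha : a ≤ 1) (hb0 : 0 ≤ b) (hb : b ≤ d)
    (hc0 : 0 ≤ c) (hc : c ≤ 1) : a*b*c ≤ d := by
  calc a*b*c ≤ a*b := mul_le_of_le_one_right (mul_nonneg ha0 hb0) hc
    _ ≤ b := mul_le_of_le_one_left hb0 ha
    _ ≤ d := hb

lemma setDist_nonneg' (E F : Set ℝ) : 0 ≤ setDist E F := by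
  apply Real.sInf_nonneg
  rintro x ⟨⟨a,b⟩, _, rfl⟩
  exact dist_nonneg

lemma dil_nonempty (c L : ℝ) (hL : 0 < L) : (dil 1 c L).Nonempty := by
  refine ⟨c, ?_, ?_⟩ <;> simp only [one_mul] <;> linarith

lemma corona_nonempty (k : ℕ) (c L : ℝ) (hL : 0 < L) : (corona k c L).Nonempty := by
  refine ⟨c + 1 * L / 2 + ((2:ℝ)^k - 1)*L, ?_⟩
  have h2k : (1:ℝ) ≤ (2:ℝ)^k := one_le_pow₀ (by norm_num)
  have hInf : Metric.infDist (c + 1 * L / 2 + ((2:ℝ)^k - 1)*L) (dil 1 c L)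
      = ((2:ℝ)^k - 1)*L := by
    apply le_antisymm
    · have hmem : c + 1 * L / 2 ∈ dil 1 c L := ⟨by linarith, le_refl _⟩
      calc Metric.infDist _ (dil 1 c L) ≤ dist (c + 1 * L / 2 + ((2:ℝ)^k - 1)*L) (c + 1 * L / 2) :=
            Metric.infDist_le_dist_of_mem hmem
        _ = ((2:ℝ)^k - 1)*L := by
            rw [Real.dist_eq, abs_of_nonneg (by nlinarith)]; ring
    · by_contra hcon
      push_neg at hcon
      obtain ⟨y, ⟨hy1, hy2⟩, hy3⟩ := (Metric.infDist_lt_iff (dil_nonempty c L hL)).1 hcon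
      rw [Real.dist_eq] at hy3
      have : ((2:ℝ)^k - 1)*L ≤ c + 1 * L / 2 + ((2:ℝ)^k - 1)*L - y := by linarith
      have := this.trans (le_abs_self _)
      linarith
  constructor
  · rw [hInf, mul_div_assoc, div_self hL.ne']; linarith
  · rw [hInf, mul_div_assoc, div_self hL.ne', pow_succ]; nlinarith

lemma corona_dist (k : ℕ) (c L : ℝ) (hL : 0 < L) {a b : ℝ} (ha : a ∈ dil 1 c L)
    (hb : b ∈ corona k c L) : ((2:ℝ)^k - 1)*L ≤ dist a b := by
  have h1 : (2:ℝ)^k ≤ 1 + Metric.infDist b (dil 1 c L) / L := hb.1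
  have h2 : ((2:ℝ)^k - 1)*L ≤ Metric.infDist b (dil 1 c L) := by
    have := (le_div_iff₀ hL).1 (show (2:ℝ)^k - 1 ≤ Metric.infDist b (dil 1 c L) / L by linarith)
    linarith
  calc ((2:ℝ)^k - 1)*L ≤ Metric.infDist b (dil 1 c L) := h2
    _ ≤ dist b a := Metric.infDist_le_dist_of_mem ha
    _ = dist a b := dist_comm _ _


/-- With `I` an interval, `l ≤ 0`, `I₀` an interval of length `2^l |I|` with `I₀ ⊄ 2I`,
the quantity
`A(I₀) = (1 + d(I,I₀)/|I₀|)^{-Nθ₃} (1 + d(C_{k₁}(I),I₀)/|I₀|)^{-Nθ₁} (1 + d(C_{k₂}(I),I₀)/|I₀|)^{-Nθ₂}`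
satisfies `A(I₀) ≲ 2^{-k₁ N min{θ₁,θ₃}}`, with implicit constant depending only on `N, θᵢ`. -/
theorem stmt10 (N θ₁ θ₂ θ₃ : ℝ) (hN : 1 ≤ N)
    (h1 : θ₁ ∈ Set.Ioo (0:ℝ) 1) (h2 : θ₂ ∈ Set.Ioo (0:ℝ) 1) (h3 : θ₃ ∈ Set.Ioo (0:ℝ) 1) :
    ∃ Cst : ℝ, 0 < Cst ∧
      ∀ (c L : ℝ), 0 < L → ∀ l : ℤ, l ≤ 0 → ∀ (c₀ : ℝ) (k₁ k₂ : ℕ),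
        ¬ (dil 1 c₀ ((2:ℝ)^l * L) ⊆ dil 2 c L) →
        (1 + setDist (dil 1 c L) (dil 1 c₀ ((2:ℝ)^l * L)) / ((2:ℝ)^l * L)) ^ (-(N * θ₃)) *
        (1 + setDist (corona k₁ c L) (dil 1 c₀ ((2:ℝ)^l * L)) / ((2:ℝ)^l * L)) ^ (-(N * θ₁)) *
        (1 + setDist (corona k₂ c L) (dil 1 c₀ ((2:ℝ)^l * L)) / ((2:ℝ)^l * L)) ^ (-(N * θ₂))
          ≤ Cst * (2:ℝ) ^ (-((k₁:ℝ) * N * min θ₁ θ₃)) := by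
  set m := min θ₁ θ₃ with hm
  have hm0 : 0 < m := lt_min h1.1 h3.1
  have hm1 : m ≤ 1 := le_trans (min_le_left _ _) h1.2.le
  have hNm : 0 < N * m := by positivity
  refine ⟨(2:ℝ) ^ N, Real.rpow_pos_of_pos two_pos N, ?_⟩
  intro c L hL l hl c₀ k₁ k₂ _
  set L₀ := (2:ℝ)^l * L with hL₀def
  have hL₀ : 0 < L₀ := by positivity
  have hL₀L : L₀ ≤ L := by
    have h2l : (2:ℝ)^l ≤ 1 := zpow_le_one_of_nonpos₀ (by norm_num) hl
    nlinarith
  set d₃ := setDist (dil 1 c L) (dil 1 c₀ L₀) with hd₃def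
  set d₁ := setDist (corona k₁ c L) (dil 1 c₀ L₀) with hd₁def
  set d₂ := setDist (corona k₂ c L) (dil 1 c₀ L₀) with hd₂def
  have hd₃0 : 0 ≤ d₃ := setDist_nonneg' _ _
  have hd₁0 : 0 ≤ d₁ := setDist_nonneg' _ _
  have hd₂0 : 0 ≤ d₂ := setDist_nonneg' _ _
  -- nonemptiness of image sets
  have hI₀ne : (dil 1 c₀ L₀).Nonempty := dil_nonempty c₀ L₀ hL₀
  have hIm3ne : ((fun p : ℝ × ℝ => dist p.1 p.2) '' ((dil 1 c L) ×ˢ (dil 1 c₀ L₀))).Nonempty := by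
    obtain ⟨a, ha⟩ := dil_nonempty c L hL
    obtain ⟨a₀, ha₀⟩ := hI₀ne
    exact ⟨_, ⟨(a, a₀), ⟨ha, ha₀⟩, rfl⟩⟩
  have hIm1ne : ((fun p : ℝ × ℝ => dist p.1 p.2) '' ((corona k₁ c L) ×ˢ (dil 1 c₀ L₀))).Nonempty := by
    obtain ⟨b, hb⟩ := corona_nonempty k₁ c L hL
    obtain ⟨a₀, ha₀⟩ := hI₀ne
    exact ⟨_, ⟨(b, a₀), ⟨hb, ha₀⟩, rfl⟩⟩
  -- key sum bound
  have hI₀diam : ∀ x ∈ dil 1 c₀ L₀, ∀ y ∈ dil 1 c₀ L₀, dist x y ≤ L₀ := by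
    rintro x ⟨hx1, hx2⟩ y ⟨hy1, hy2⟩
    rw [Real.dist_eq, abs_le]
    constructor <;> [skip; skip] <;> simp only [one_mul] at hx1 hx2 hy1 hy2 <;> linarith
  have hsum : ((2:ℝ)^k₁ - 1)*L - L₀ ≤ d₃ + d₁ := by
    have key : ((2:ℝ)^k₁ - 1)*L - L₀ - d₁ ≤ d₃ := by
      apply le_csInf hIm3ne
      rintro p ⟨⟨a, a₀⟩, ⟨ha, ha₀⟩, rfl⟩
      have key2 : ((2:ℝ)^k₁ - 1)*L - L₀ - dist a a₀ ≤ d₁ := by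
        apply le_csInf hIm1ne
        rintro q ⟨⟨b, b₀⟩, ⟨hb, hb₀⟩, rfl⟩
        have h1' : ((2:ℝ)^k₁ - 1)*L ≤ dist a b := corona_dist k₁ c L hL ha hb
        have h2' : dist a₀ b₀ ≤ L₀ := hI₀diam a₀ ha₀ b₀ hb₀
        have h3' : dist a b ≤ dist a a₀ + dist a₀ b₀ + dist b₀ b :=
          (dist_triangle a a₀ b).trans (by linarith [dist_triangle a₀ b₀ b])
        have h4' : dist b₀ b = dist b b₀ := dist_comm _ _
        linarith
      linarith
    linarith
  -- one of d₃, d₁ is big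
  have hbig : ∃ (d : ℝ) (θ : ℝ), θ = θ₃ ∨ θ = θ₁ ∧ True := ⟨0, θ₃, Or.inl rfl⟩
  clear hbig
  -- factor bounds
  have base_one : ∀ d : ℝ, 0 ≤ d → (1:ℝ) ≤ 1 + d / L₀ := fun d hd => by
    have : 0 ≤ d / L₀ := div_nonneg hd hL₀.le
    linarith
  have fac_le_one : ∀ (d θ : ℝ), 0 ≤ d → 0 < θ → (1 + d / L₀) ^ (-(N*θ)) ≤ 1 := fun d θ hd hθ =>
    Real.rpow_le_one_of_one_le_of_nonpos (base_one d hd) (by nlinarith)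
  have fac_pos : ∀ (d θ : ℝ), 0 ≤ d → (0:ℝ) < (1 + d / L₀) ^ (-(N*θ)) := fun d θ hd =>
    Real.rpow_pos_of_pos (by linarith [base_one d hd]) _
  -- the big factor bound
  have bigfac : ∀ (d θ : ℝ), 0 ≤ d → 0 < θ → m ≤ θ → ((2:ℝ)^k₁ - 2)*L/2 ≤ d →
      (1 + d / L₀) ^ (-(N*θ)) ≤ (2:ℝ)^N * (2:ℝ) ^ (-((k₁:ℝ) * N * m)) := by
    intro d θ hd hθ hmθ hdbig
    have hx1 : (1:ℝ) ≤ 1 + d / L₀ := base_one d hd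
    have hxL : d / L ≤ d / L₀ := div_le_div_of_nonneg_left hd hL₀ hL₀L
    have hxlow : (2:ℝ)^k₁ / 2 ≤ 1 + d / L₀ := by
      have hdL : ((2:ℝ)^k₁ - 2)/2 ≤ d / L := by
        rw [div_le_div_iff₀ (by norm_num) hL]
        nlinarith
      linarith
    have hxpos : (0:ℝ) < 1 + d / L₀ := by linarith
    have s1 : (1 + d / L₀) ^ (-(N*θ)) ≤ (1 + d / L₀) ^ (-(N*m)) :=
      Real.rpow_le_rpow_of_exponent_le hx1 (by nlinarith)
    have s2 : (1 + d / L₀) ^ (-(N*m)) ≤ ((2:ℝ)^k₁ / 2) ^ (-(N*m)) := by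
      have hb0 : (0:ℝ) < (2:ℝ)^k₁ / 2 := by positivity
      have h' : ((2:ℝ)^k₁ / 2) ^ (N*m) ≤ (1 + d / L₀) ^ (N*m) :=
        Real.rpow_le_rpow hb0.le hxlow hNm.le
      rw [Real.rpow_neg hb0.le, Real.rpow_neg hxpos.le]
      exact inv_anti₀ (Real.rpow_pos_of_pos hb0 _) h'
    have s3 : ((2:ℝ)^k₁ / 2) ^ (-(N*m)) = (2:ℝ)^(N*m) * (2:ℝ) ^ (-((k₁:ℝ) * N * m)) := by
      have hbase : (2:ℝ)^k₁ / 2 = (2:ℝ) ^ ((k₁:ℝ) - 1) := by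
        rw [Real.rpow_sub two_pos, Real.rpow_one, Real.rpow_natCast]
      rw [hbase, ← Real.rpow_mul (by norm_num : (0:ℝ) ≤ 2), ← Real.rpow_add two_pos]
      congr 1
      ring
    have s4 : (2:ℝ)^(N*m) ≤ (2:ℝ)^N :=
      Real.rpow_le_rpow_of_exponent_le one_le_two (by nlinarith)
    calc (1 + d / L₀) ^ (-(N*θ)) ≤ ((2:ℝ)^k₁ / 2) ^ (-(N*m)) := s1.trans s2
      _ = (2:ℝ)^(N*m) * (2:ℝ) ^ (-((k₁:ℝ) * N * m)) := s3
      _ ≤ (2:ℝ)^N * (2:ℝ) ^ (-((k₁:ℝ) * N * m)) :=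
          mul_le_mul_of_nonneg_right s4 (Real.rpow_pos_of_pos two_pos _).le
  have hhalf : ((2:ℝ)^k₁ - 2)*L ≤ d₃ + d₁ := by nlinarith
  rcases le_total d₃ d₁ with hc | hc
  · -- d₁ is big
    have hd₁big : ((2:ℝ)^k₁ - 2)*L/2 ≤ d₁ := by linarith
    exact mul3_le₂ _ _ _ _ (fac_pos d₃ θ₃ hd₃0).le (fac_le_one d₃ θ₃ hd₃0 h3.1)
      (fac_pos d₁ θ₁ hd₁0).le (bigfac d₁ θ₁ hd₁0 h1.1 (min_le_left _ _) hd₁big)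
      (fac_pos d₂ θ₂ hd₂0).le (fac_le_one d₂ θ₂ hd₂0 h2.1)
  · -- d₃ is big
    have hd₃big : ((2:ℝ)^k₁ - 2)*L/2 ≤ d₃ := by linarith
    exact mul3_le₁ _ _ _ _ (fac_pos d₃ θ₃ hd₃0).le (bigfac d₃ θ₃ hd₃0 h3.1 (min_le_right _ _) hd₃big)
      (fac_pos d₁ θ₁ hd₁0).le (fac_le_one d₁ θ₁ hd₁0 h1.1)
      (fac_pos d₂ θ₂ hd₂0).le (fac_le_one d₂ θ₂ hd₂0 h2.1)
end

section
/- Let T be a bilinear operator, 0 < p, q, r < ∞ with 1/r = 1/p + 1/q and p, q > 1, and suppose T satisfies off-diagonal estimates at scale l and order δ > 0: for every interval I with |I| = l, ‖T(f,g)‖_{L^r(I)} ≤ C (Σ_{k≥0} 2^{−k(1/p+δ)} ‖f‖_{L^p(2^{k}I)}) (Σ_{k≥0} 2^{−k(1/q+δ)} ‖g‖_{L^q(2^{k}I)}). Then for every weight ω ∈ P_θ(l) with 0 ≤ θ < δ·max{r,1}, T is bounded from L^p(ω) × L^q(ω) to L^r(ω), i.e. ‖T(f,g)‖_{L^r(ω)}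 ≲ ‖f‖_{L^p(ω)} ‖g‖_{L^q(ω)}. -/
open MeasureTheory Set

/-- The weight class `P_θ(l)` (pointwise formulation). -/
def memP (θ l : ℝ) (ω : ℝ → ℝ) : Prop :=
  ∃ C : ℝ, ∀ x y : ℝ, ω x ≤ C * (1 + |x - y| / l) ^ θ * ω y

lemma rpow_cancel {x e : ℝ} (hx : 0 ≤ x) (he : e ≠ 0) : (x ^ (1/e)) ^ e = x := by
  rw [← Real.rpow_mul hx, one_div, inv_mul_cancel₀ he, Real.rpow_one]

lemma two_rpow_pos (t : ℝ) : (0:ℝ) < 2 ^ t := Real.rpow_pos_of_pos two_pos t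

lemma sum_geom {b : ℝ} (hb : 0 < b) : Summable (fun k : ℕ => (2:ℝ) ^ (-(k:ℝ) * b)) := by
  have h : ∀ k : ℕ, (2:ℝ) ^ (-(k:ℝ) * b) = ((2:ℝ) ^ (-b)) ^ (k:ℕ) := by
    intro k
    rw [← Real.rpow_natCast ((2:ℝ) ^ (-b)) k, ← Real.rpow_mul (by norm_num : (0:ℝ) ≤ 2)]
    congr 1; ring
  rw [funext h]
  exact summable_geometric_of_lt_one (Real.rpow_nonneg (by norm_num) _)
    (Real.rpow_lt_one_of_one_lt_of_neg one_lt_two (by linarith))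

lemma sum_geom_mul {s : ℝ} (hs : 1 < s) :
    Summable (fun k : ℕ => (2:ℝ) ^ (-(k:ℝ) * s) * ((2:ℝ) ^ k + 1)) := by
  have h : ∀ k : ℕ, (2:ℝ) ^ (-(k:ℝ) * s) * ((2:ℝ) ^ k + 1)
      = (2:ℝ) ^ (-(k:ℝ) * (s-1)) + (2:ℝ) ^ (-(k:ℝ) * s) := by
    intro k
    rw [mul_add, mul_one, ← Real.rpow_natCast 2 k, ← Real.rpow_add two_pos]
    congr 2; ring
  rw [funext h]
  exact (sum_geom (by linarith)).add (sum_geom (by linarith))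

lemma mul_rpow3 {a b c : ℝ} (ha : 0 ≤ a) (hb : 0 ≤ b) (hc : 0 ≤ c) (r : ℝ) :
    (a * b * c) ^ r = a ^ r * b ^ r * c ^ r := by
  rw [Real.mul_rpow (mul_nonneg ha hb) hc, Real.mul_rpow ha hb]

lemma key_low {u ω : ℝ → ℝ} (hu : Measurable u) (hu0 : ∀ x, 0 ≤ u x)
    {S : Set ℝ} (hS : MeasurableSet S) {m : ℝ} (hm : 0 < m) (hmω : ∀ x ∈ S, m ≤ ω x)
    (hI : Integrable (fun x => u x * ω x)) :
    IntegrableOn u S ∧ ∫ x in S, u x ≤ m⁻¹ * ∫ x in S, u x * ω x := by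
  have hbound : ∀ x ∈ S, u x ≤ m⁻¹ * (u x * ω x) := by
    intro x hx
    have h1 : u x * m ≤ u x * ω x := mul_le_mul_of_nonneg_left (hmω x hx) (hu0 x)
    calc u x = m⁻¹ * (u x * m) := by field_simp
      _ ≤ m⁻¹ * (u x * ω x) := mul_le_mul_of_nonneg_left h1 (by positivity)
  have hIS : IntegrableOn (fun x => u x * ω x) S := hI.integrableOn
  have hiu : IntegrableOn u S := by
    refine Integrable.mono' (hIS.const_mul m⁻¹) hu.aestronglyMeasurable.restrict ?_
    filter_upwards [ae_restrict_mem hS] with x hx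
    rw [Real.norm_eq_abs, abs_of_nonneg (hu0 x)]
    exact hbound x hx
  refine ⟨hiu, ?_⟩
  calc ∫ x in S, u x ≤ ∫ x in S, m⁻¹ * (u x * ω x) :=
        setIntegral_mono_on hiu (hIS.const_mul m⁻¹) hS hbound
    _ = m⁻¹ * ∫ x in S, u x * ω x := by rw [integral_const_mul]

noncomputable def apE (p δ θ : ℝ) : ℝ := 1/p + δ - θ/p
noncomputable def spE (p δ θ : ℝ) : ℝ := (1 + p * apE p δ θ)/2
noncomputable def epE (p δ θ : ℝ) : ℝ := apE p δ θ - spE p δ θ / p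
noncomputable def pcE (p : ℝ) : ℝ := p/(p-1)
noncomputable def KaE (p δ θ : ℝ) : ℝ := ∑' k:ℕ, (2:ℝ)^(-(k:ℝ)*(epE p δ θ * pcE p))
noncomputable def KbE (p δ θ : ℝ) : ℝ := ∑' k:ℕ, (2:ℝ)^(-(k:ℝ)*(spE p δ θ)) * ((2:ℝ)^k + 1)
noncomputable def sideD (Cw θ p : ℝ) : ℝ := Cw^(1/p) * (2:ℝ)^(θ/p)
noncomputable def sideK (p δ θ : ℝ) : ℝ := ((KaE p δ θ)^(1/pcE p))^p * KbE p δ θ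

lemma exponent_facts {p δ θ : ℝ} (hp : 1 < p) (hδ : 0 < δ) (hθ0 : 0 ≤ θ) (hθp : θ < δ * p) :
    0 < apE p δ θ ∧ 1 < spE p δ θ ∧ 0 < epE p δ θ ∧ p.HolderConjugate (pcE p) := by
  have hp0 : 0 < p := one_pos.trans hp
  have hpap : 1 < p * apE p δ θ := by
    have h : p * apE p δ θ = 1 + p*δ - θ := by unfold apE; field_simp
    rw [h]; nlinarith
  have hap0 : 0 < apE p δ θ := by nlinarith
  have hsp1 : 1 < spE p δ θ := by unfold spE; linarith
  have hep0 : 0 < epE p δ θ := by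
    unfold epE
    rw [sub_pos, div_lt_iff₀ hp0]
    unfold spE; nlinarith
  refine ⟨hap0, hsp1, hep0, Real.holderConjugate_iff.mpr ⟨hp, ?_⟩⟩
  unfold pcE
  rw [inv_div]
  field_simp
  ring

lemma sideK_nonneg (p δ θ : ℝ) : 0 ≤ sideK p δ θ := by
  unfold sideK KbE
  refine mul_nonneg (Real.rpow_nonneg (Real.rpow_nonneg ?_ _) _) (tsum_nonneg fun k => ?_)
  · unfold KaE; exact tsum_nonneg fun k => (two_rpow_pos _).le
  · have := two_rpow_pos (-(k:ℝ) * spE p δ θ)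
    positivity

lemma sideD_pos {Cw θ p : ℝ} (hCw : 0 < Cw) : 0 < sideD Cw θ p := by
  unfold sideD
  exact mul_pos (Real.rpow_pos_of_pos hCw _) (two_rpow_pos _)
lemma overlap {l : ℝ} (hl : 0 < l) {h : ℝ → ℝ} (hh0 : ∀ x, 0 ≤ h x)
    (hhI : Integrable h) (k : ℕ) (s : Finset ℤ) :
    ∑ i ∈ s, ∫ x in dil ((2:ℝ)^k) ((i:ℝ)*l + l/2) l, h x ≤ ((2:ℝ)^k + 1) * ∫ x, h x := by
  set J : ℤ → Set ℝ := fun i => dil ((2:ℝ)^k) ((i:ℝ)*l + l/2) l with hJ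
  have hmeas : ∀ i, MeasurableSet (J i) := fun i => measurableSet_Icc
  have hptwise : ∀ x : ℝ, ∑ i ∈ s, (J i).indicator h x ≤ ((2:ℝ)^k + 1) * h x := by
    intro x
    set y : ℝ := (x - l/2)/l with hy
    set t : Finset ℤ := Finset.Icc ⌈y - (2:ℝ)^k/2⌉ ⌊y + (2:ℝ)^k/2⌋ with ht
    have hmemt : ∀ i : ℤ, x ∈ J i → i ∈ t := by
      intro i hxi
      rw [hJ] at hxi
      simp only [dil, Set.mem_Icc] at hxi
      obtain ⟨h1, h2⟩ := hxi
      have hi1 : (i:ℝ) ≤ y + (2:ℝ)^k/2 := by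
        rw [hy, div_add' _ _ _ (ne_of_gt hl), le_div_iff₀ hl]
        nlinarith
      have hi2 : y - (2:ℝ)^k/2 ≤ (i:ℝ) := by
        rw [hy, div_sub' (ne_of_gt hl), div_le_iff₀ hl]
        nlinarith
      rw [ht, Finset.mem_Icc]
      exact ⟨Int.ceil_le.mpr hi2, Int.le_floor.mpr hi1⟩
    have hcardt : (t.card : ℝ) ≤ (2:ℝ)^k + 1 := by
      have hfl : ⌊y + (2:ℝ)^k/2⌋ ≤ ⌈y - (2:ℝ)^k/2⌉ + (2:ℤ)^k := by
        have heq : ⌊y + (2:ℝ)^k/2⌋ = ⌊y - (2:ℝ)^k/2⌋ + (2:ℤ)^k := by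
          rw [show y + (2:ℝ)^k/2 = (y - (2:ℝ)^k/2) + (((2:ℤ)^k : ℤ) : ℝ) by push_cast; ring]
          exact Int.floor_add_intCast _ _
        rw [heq]
        exact add_le_add_left (Int.floor_le_ceil _) _
      have hcard : t.card ≤ ((2:ℤ)^k + 1).toNat := by
        rw [ht, Int.card_Icc]
        apply Int.toNat_le_toNat
        omega
      calc (t.card : ℝ) ≤ (((2:ℤ)^k + 1).toNat : ℝ) := by exact_mod_cast hcard
        _ = (2:ℝ)^k + 1 := by
            have h0 : ((((2:ℤ)^k + 1).toNat : ℤ) : ℝ) = (((2:ℤ)^k + 1 : ℤ) : ℝ) := by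
              rw [Int.toNat_of_nonneg (by positivity)]
            push_cast at h0 ⊢
            linarith
    calc ∑ i ∈ s, (J i).indicator h x = ∑ i ∈ s ∩ t, (J i).indicator h x := by
          refine (Finset.sum_subset Finset.inter_subset_left ?_).symm
          intro i hi hni
          apply Set.indicator_of_notMem
          intro hxJ
          exact hni (Finset.mem_inter.mpr ⟨hi, hmemt i hxJ⟩)
      _ ≤ ∑ _i ∈ s ∩ t, h x := by
          refine Finset.sum_le_sum fun i _ => ?_
          exact Set.indicator_le_self' (fun _ _ => hh0 x) x
      _ = ((s ∩ t).card : ℝ) * h x := by rw [Finset.sum_const, nsmul_eq_mul]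
      _ ≤ ((2:ℝ)^k + 1) * h x := by
          refine mul_le_mul_of_nonneg_right ?_ (hh0 x)
          refine le_trans ?_ hcardt
          exact_mod_cast Finset.card_le_card Finset.inter_subset_right
  calc ∑ i ∈ s, ∫ x in J i, h x = ∑ i ∈ s, ∫ x, (J i).indicator h x := by
        refine Finset.sum_congr rfl fun i _ => ?_
        rw [integral_indicator (hmeas i)]
    _ = ∫ x, ∑ i ∈ s, (J i).indicator h x := by
        rw [integral_finset_sum s (fun i _ => hhI.indicator (hmeas i))]
    _ ≤ ∫ x, ((2:ℝ)^k + 1) * h x := by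
        refine integral_mono (integrable_finset_sum s (fun i _ => hhI.indicator (hmeas i)))
          (hhI.const_mul _) hptwise
    _ = ((2:ℝ)^k + 1) * ∫ x, h x := integral_const_mul _ _

lemma side {p δ l θ Cw : ℝ} (hp : 1 < p) (hδ : 0 < δ) (hl : 0 < l) (hθ0 : 0 ≤ θ)
    (hθp : θ < δ * p) (hCw0 : 0 < Cw)
    {ω : ℝ → ℝ} (hω0 : ∀ x, 0 ≤ ω x) (hpos : ∀ x, 0 < ω x)
    (hwlow : ∀ (i : ℤ) (k : ℕ), ∀ x ∈ dil ((2:ℝ)^k) ((i:ℝ)*l + l/2) l,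
      (Cw * (2:ℝ)^(((k:ℝ)+1)*θ))⁻¹ * ω ((i:ℝ)*l + l/2) ≤ ω x)
    {f : ℝ → ℝ} (hfm : Measurable f)
    (hfI : Integrable (fun x => |f x|^p * ω x)) :
    ∃ P : ℤ → ℝ, (∀ i, 0 ≤ P i) ∧
      (∀ i : ℤ, (∑' k : ℕ, (2:ℝ)^(-(k:ℝ)*(1/p + δ)) *
          (∫ x in dil ((2:ℝ)^k) ((i:ℝ)*l + l/2) l, |f x|^p)^(1/p))
        ≤ sideD Cw θ p * ((ω ((i:ℝ)*l + l/2))⁻¹)^(1/p) * P i) ∧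
      (∀ s : Finset ℤ, ∑ i ∈ s, (P i)^p ≤ sideK p δ θ * ∫ x, |f x|^p * ω x) := by
  obtain ⟨hap0, hsp1, hep0, hconj⟩ := exponent_facts hp hδ hθ0 hθp
  have hp0 : 0 < p := one_pos.trans hp
  have hpne : p ≠ 0 := ne_of_gt hp0
  have h2 : (0:ℝ) ≤ 2 := by norm_num
  have hpc1 : 1 < pcE p := hconj.symm.lt
  have hpc0 : 0 < pcE p := one_pos.trans hpc1
  have hfp_meas : Measurable fun x => |f x|^p := hfm.abs.pow measurable_const
  have hfp0 : ∀ x : ℝ, 0 ≤ |f x|^p := fun x => Real.rpow_nonneg (abs_nonneg _) _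
  have hfω0 : ∀ x : ℝ, 0 ≤ |f x|^p * ω x := fun x => mul_nonneg (hfp0 x) (hω0 x)
  have hA0 : 0 ≤ ∫ x, |f x|^p * ω x := integral_nonneg hfω0
  set A := ∫ x, |f x|^p * ω x with hA
  set β : ℤ → ℕ → ℝ := fun i k => ∫ x in dil ((2:ℝ)^k) ((i:ℝ)*l + l/2) l, |f x|^p * ω x with hβ
  have hdilmeas : ∀ (lam c L : ℝ), MeasurableSet (dil lam c L) := fun _ _ _ => measurableSet_Icc
  have hβ0 : ∀ i k, 0 ≤ β i k := fun i k => setIntegral_nonneg (hdilmeas _ _ _) (fun x _ => hfω0 x)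
  have hβA : ∀ i k, β i k ≤ A := fun i k =>
    setIntegral_le_integral hfI (Filter.Eventually.of_forall hfω0)
  have hwpos : ∀ i : ℤ, 0 < ω ((i:ℝ)*l + l/2) := fun i => hpos _
  have hEk0 : ∀ k : ℕ, 0 < Cw * (2:ℝ)^(((k:ℝ)+1)*θ) := fun k => mul_pos hCw0 (two_rpow_pos _)
  have hkey : ∀ (i : ℤ) (k : ℕ), ∫ x in dil ((2:ℝ)^k) ((i:ℝ)*l + l/2) l, |f x|^p
      ≤ (Cw * (2:ℝ)^(((k:ℝ)+1)*θ)) * (ω ((i:ℝ)*l + l/2))⁻¹ * β i k := by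
    intro i k
    have h := (key_low hfp_meas hfp0 (hdilmeas _ _ _)
      (mul_pos (inv_pos.mpr (hEk0 k)) (hwpos i)) (hwlow i k) hfI).2
    rwa [mul_inv, inv_inv] at h
  have hscal : ∀ k : ℕ, (2:ℝ)^(-(k:ℝ)*(1/p+δ)) * (Cw * (2:ℝ)^(((k:ℝ)+1)*θ))^(1/p)
      = sideD Cw θ p * (2:ℝ)^(-(k:ℝ)*apE p δ θ) := by
    intro k
    have e1 : (2:ℝ)^(-(k:ℝ)*(1/p+δ)) * (2:ℝ)^((((k:ℝ)+1)*θ)*(1/p))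
        = (2:ℝ)^(θ/p) * (2:ℝ)^(-(k:ℝ)*apE p δ θ) := by
      rw [← Real.rpow_add two_pos, ← Real.rpow_add two_pos]
      congr 1
      unfold apE
      field_simp
      ring
    calc (2:ℝ)^(-(k:ℝ)*(1/p+δ)) * (Cw * (2:ℝ)^(((k:ℝ)+1)*θ))^(1/p)
        = Cw^(1/p) * ((2:ℝ)^(-(k:ℝ)*(1/p+δ)) * (2:ℝ)^((((k:ℝ)+1)*θ)*(1/p))) := by
          rw [Real.mul_rpow hCw0.le (two_rpow_pos _).le, ← Real.rpow_mul h2]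
          ring
      _ = Cw^(1/p) * ((2:ℝ)^(θ/p) * (2:ℝ)^(-(k:ℝ)*apE p δ θ)) := by rw [e1]
      _ = sideD Cw θ p * (2:ℝ)^(-(k:ℝ)*apE p δ θ) := by unfold sideD; ring
  set P : ℤ → ℝ := fun i => ∑' k : ℕ, (2:ℝ)^(-(k:ℝ)*apE p δ θ) * (β i k)^(1/p) with hP
  have hfβA : ∀ i k, (β i k)^(1/p) ≤ A^(1/p) := fun i k =>
    Real.rpow_le_rpow (hβ0 i k) (hβA i k) (by positivity)
  have hPsummand : ∀ i : ℤ, Summable (fun k : ℕ => (2:ℝ)^(-(k:ℝ)*apE p δ θ) * (β i k)^(1/p)) := by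
    intro i
    refine Summable.of_nonneg_of_le
      (fun k => mul_nonneg (two_rpow_pos _).le (Real.rpow_nonneg (hβ0 i k) _))
      (fun k => mul_le_mul_of_nonneg_left (hfβA i k) (two_rpow_pos _).le)
      ((sum_geom hap0).mul_right (A^(1/p)))
  have hP0 : ∀ i, 0 ≤ P i := fun i =>
    tsum_nonneg (fun k => mul_nonneg (two_rpow_pos _).le (Real.rpow_nonneg (hβ0 i k) _))
  refine ⟨P, hP0, ?_, ?_⟩
  · -- first claim
    intro i
    have hterm : ∀ k : ℕ, (2:ℝ)^(-(k:ℝ)*(1/p + δ)) *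
        (∫ x in dil ((2:ℝ)^k) ((i:ℝ)*l + l/2) l, |f x|^p)^(1/p)
        ≤ (sideD Cw θ p * ((ω ((i:ℝ)*l + l/2))⁻¹)^(1/p)) *
          ((2:ℝ)^(-(k:ℝ)*apE p δ θ) * (β i k)^(1/p)) := by
      intro k
      have hX0 : 0 ≤ ∫ x in dil ((2:ℝ)^k) ((i:ℝ)*l + l/2) l, |f x|^p :=
        setIntegral_nonneg (hdilmeas _ _ _) (fun x _ => hfp0 x)
      have hF : (∫ x in dil ((2:ℝ)^k) ((i:ℝ)*l + l/2) l, |f x|^p)^(1/p)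
          ≤ (Cw * (2:ℝ)^(((k:ℝ)+1)*θ))^(1/p) * ((ω ((i:ℝ)*l + l/2))⁻¹)^(1/p) * (β i k)^(1/p) := by
        rw [← mul_rpow3 (hEk0 k).le (inv_pos.mpr (hwpos i)).le (hβ0 i k)]
        exact Real.rpow_le_rpow hX0 (hkey i k) (by positivity)
      calc (2:ℝ)^(-(k:ℝ)*(1/p + δ)) *
            (∫ x in dil ((2:ℝ)^k) ((i:ℝ)*l + l/2) l, |f x|^p)^(1/p)
          ≤ (2:ℝ)^(-(k:ℝ)*(1/p + δ)) * ((Cw * (2:ℝ)^(((k:ℝ)+1)*θ))^(1/p) *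
              ((ω ((i:ℝ)*l + l/2))⁻¹)^(1/p) * (β i k)^(1/p)) :=
            mul_le_mul_of_nonneg_left hF (two_rpow_pos _).le
        _ = ((2:ℝ)^(-(k:ℝ)*(1/p+δ)) * (Cw * (2:ℝ)^(((k:ℝ)+1)*θ))^(1/p)) *
              (((ω ((i:ℝ)*l + l/2))⁻¹)^(1/p) * (β i k)^(1/p)) := by ring
        _ = (sideD Cw θ p * ((ω ((i:ℝ)*l + l/2))⁻¹)^(1/p)) *
              ((2:ℝ)^(-(k:ℝ)*apE p δ θ) * (β i k)^(1/p)) := by rw [hscal k]; ring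
    have hsum2 : Summable (fun k : ℕ => (sideD Cw θ p * ((ω ((i:ℝ)*l + l/2))⁻¹)^(1/p)) *
        ((2:ℝ)^(-(k:ℝ)*apE p δ θ) * (β i k)^(1/p))) := (hPsummand i).mul_left _
    have hsum1 : Summable (fun k : ℕ => (2:ℝ)^(-(k:ℝ)*(1/p + δ)) *
        (∫ x in dil ((2:ℝ)^k) ((i:ℝ)*l + l/2) l, |f x|^p)^(1/p)) := by
      refine Summable.of_nonneg_of_le (fun k => ?_) hterm hsum2
      exact mul_nonneg (two_rpow_pos _).le
        (Real.rpow_nonneg (setIntegral_nonneg (hdilmeas _ _ _) (fun x _ => hfp0 x)) _)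
    calc (∑' k : ℕ, (2:ℝ)^(-(k:ℝ)*(1/p + δ)) *
          (∫ x in dil ((2:ℝ)^k) ((i:ℝ)*l + l/2) l, |f x|^p)^(1/p))
        ≤ ∑' k : ℕ, (sideD Cw θ p * ((ω ((i:ℝ)*l + l/2))⁻¹)^(1/p)) *
            ((2:ℝ)^(-(k:ℝ)*apE p δ θ) * (β i k)^(1/p)) := hsum1.tsum_le_tsum hterm hsum2
      _ = sideD Cw θ p * ((ω ((i:ℝ)*l + l/2))⁻¹)^(1/p) * P i := by
          rw [tsum_mul_left, hP, mul_assoc]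
  · -- second claim
    intro s
    have hαsummand : ∀ i : ℤ, Summable (fun k : ℕ => (2:ℝ)^(-(k:ℝ)*spE p δ θ) * β i k) := by
      intro i
      refine Summable.of_nonneg_of_le
        (fun k => mul_nonneg (two_rpow_pos _).le (hβ0 i k))
        (fun k => mul_le_mul_of_nonneg_left (hβA i k) (two_rpow_pos _).le)
        ((sum_geom (one_pos.trans hsp1)).mul_right A)
    set α : ℤ → ℝ := fun i => ∑' k : ℕ, (2:ℝ)^(-(k:ℝ)*spE p δ θ) * β i k with hα
    have hα0 : ∀ i, 0 ≤ α i := fun i =>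
      tsum_nonneg (fun k => mul_nonneg (two_rpow_pos _).le (hβ0 i k))
    have hu_eq : ∀ k : ℕ, ((2:ℝ)^(-(k:ℝ)*epE p δ θ)) ^ (pcE p)
        = (2:ℝ)^(-(k:ℝ)*(epE p δ θ * pcE p)) := by
      intro k
      rw [← Real.rpow_mul h2]
      congr 1; ring
    have hv_eq : ∀ i : ℤ, ∀ k : ℕ, ((2:ℝ)^(-(k:ℝ)*(spE p δ θ/p)) * (β i k)^(1/p)) ^ p
        = (2:ℝ)^(-(k:ℝ)*spE p δ θ) * β i k := by
      intro i k
      rw [Real.mul_rpow (two_rpow_pos _).le (Real.rpow_nonneg (hβ0 i k) _),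
        ← Real.rpow_mul h2, rpow_cancel (hβ0 i k) hpne]
      congr 2
      field_simp
    have huv_eq : ∀ i : ℤ, ∀ k : ℕ, (2:ℝ)^(-(k:ℝ)*apE p δ θ) * (β i k)^(1/p)
        = ((2:ℝ)^(-(k:ℝ)*epE p δ θ)) * ((2:ℝ)^(-(k:ℝ)*(spE p δ θ/p)) * (β i k)^(1/p)) := by
      intro i k
      rw [← mul_assoc, ← Real.rpow_add two_pos]
      congr 2
      unfold epE; ring
    have hPα : ∀ i : ℤ, P i ≤ (KaE p δ θ)^(1/pcE p) * (α i)^(1/p) := by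
      intro i
      have hu_sum : Summable (fun k : ℕ => ((2:ℝ)^(-(k:ℝ)*epE p δ θ)) ^ (pcE p)) :=
        (sum_geom (mul_pos hep0 hpc0)).congr (fun k => (hu_eq k).symm)
      have hv_sum : Summable (fun k : ℕ => ((2:ℝ)^(-(k:ℝ)*(spE p δ θ/p)) * (β i k)^(1/p)) ^ p) :=
        (hαsummand i).congr (fun k => (hv_eq i k).symm)
      have hHold := Real.inner_le_Lp_mul_Lq_tsum_of_nonneg
        (f := fun k : ℕ => (2:ℝ)^(-(k:ℝ)*epE p δ θ))
        (g := fun k : ℕ => (2:ℝ)^(-(k:ℝ)*(spE p δ θ/p)) * (β i k)^(1/p))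
        hconj.symm
        (fun k => (two_rpow_pos (-(k:ℝ)*epE p δ θ)).le)
        (fun k => mul_nonneg (two_rpow_pos _).le (Real.rpow_nonneg (hβ0 i k) _))
        hu_sum hv_sum
      calc P i = ∑' k : ℕ, ((2:ℝ)^(-(k:ℝ)*epE p δ θ)) *
            ((2:ℝ)^(-(k:ℝ)*(spE p δ θ/p)) * (β i k)^(1/p)) := by
            rw [hP]; exact tsum_congr (huv_eq i)
        _ ≤ (∑' k : ℕ, ((2:ℝ)^(-(k:ℝ)*epE p δ θ)) ^ (pcE p))^(1/pcE p) *
            (∑' k : ℕ, ((2:ℝ)^(-(k:ℝ)*(spE p δ θ/p)) * (β i k)^(1/p)) ^ p)^(1/p) := hHold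
        _ = (KaE p δ θ)^(1/pcE p) * (α i)^(1/p) := by
            rw [tsum_congr hu_eq, tsum_congr (hv_eq i), hα]
            rfl
    have hKa0 : 0 ≤ KaE p δ θ := tsum_nonneg (fun k => (two_rpow_pos _).le)
    have hPp : ∀ i : ℤ, (P i)^p ≤ ((KaE p δ θ)^(1/pcE p))^p * α i := by
      intro i
      calc (P i)^p ≤ ((KaE p δ θ)^(1/pcE p) * (α i)^(1/p))^p :=
            Real.rpow_le_rpow (hP0 i) (hPα i) hp0.le
        _ = ((KaE p δ θ)^(1/pcE p))^p * ((α i)^(1/p))^p :=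
            Real.mul_rpow (Real.rpow_nonneg hKa0 _) (Real.rpow_nonneg (hα0 i) _)
        _ = ((KaE p δ θ)^(1/pcE p))^p * α i := by rw [rpow_cancel (hα0 i) hpne]
    have hαs : ∑ i ∈ s, α i ≤ KbE p δ θ * A := by
      have hsumR : Summable (fun k : ℕ => (2:ℝ)^(-(k:ℝ)*spE p δ θ) * (((2:ℝ)^k + 1) * A)) :=
        ((sum_geom_mul hsp1).mul_right A).congr (fun k => mul_assoc _ _ _)
      have htermwise : ∀ k : ℕ, ∑ i ∈ s, (2:ℝ)^(-(k:ℝ)*spE p δ θ) * β i k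
          ≤ (2:ℝ)^(-(k:ℝ)*spE p δ θ) * (((2:ℝ)^k + 1) * A) := by
        intro k
        rw [← Finset.mul_sum]
        refine mul_le_mul_of_nonneg_left ?_ (two_rpow_pos _).le
        have hov := overlap hl hfω0 hfI k s
        rw [hβ]
        exact hov
      have hsumL : Summable (fun k : ℕ => ∑ i ∈ s, (2:ℝ)^(-(k:ℝ)*spE p δ θ) * β i k) := by
        refine Summable.of_nonneg_of_le (fun k => Finset.sum_nonneg
          (fun i _ => mul_nonneg (two_rpow_pos _).le (hβ0 i k))) htermwise hsumR
      calc ∑ i ∈ s, α i = ∑' k : ℕ, ∑ i ∈ s, (2:ℝ)^(-(k:ℝ)*spE p δ θ) * β i k := by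
            rw [hα]; exact (Summable.tsum_finsetSum (fun i _ => hαsummand i)).symm
        _ ≤ ∑' k : ℕ, (2:ℝ)^(-(k:ℝ)*spE p δ θ) * (((2:ℝ)^k + 1) * A) :=
            hsumL.tsum_le_tsum htermwise hsumR
        _ = ∑' k : ℕ, ((2:ℝ)^(-(k:ℝ)*spE p δ θ) * ((2:ℝ)^k + 1)) * A :=
            tsum_congr (fun k => (mul_assoc _ _ _).symm)
        _ = KbE p δ θ * A := by rw [tsum_mul_right]; rfl
    calc ∑ i ∈ s, (P i)^p ≤ ∑ i ∈ s, ((KaE p δ θ)^(1/pcE p))^p * α i :=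
          Finset.sum_le_sum (fun i _ => hPp i)
      _ = ((KaE p δ θ)^(1/pcE p))^p * ∑ i ∈ s, α i := by rw [← Finset.mul_sum]
      _ ≤ ((KaE p δ θ)^(1/pcE p))^p * (KbE p δ θ * A) :=
          mul_le_mul_of_nonneg_left hαs (Real.rpow_nonneg (Real.rpow_nonneg hKa0 _) _)
      _ = sideK p δ θ * A := by unfold sideK; ring
lemma key_up {u ω : ℝ → ℝ} (hu0 : ∀ x, 0 ≤ u x)
    {S : Set ℝ} (hS : MeasurableSet S) {M : ℝ} (hM : 0 ≤ M) (hmω : ∀ x ∈ S, ω x ≤ M)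
    (hI : Integrable (fun x => u x * ω x)) (hiu : IntegrableOn u S) :
    ∫ x in S, u x * ω x ≤ M * ∫ x in S, u x := by
  calc ∫ x in S, u x * ω x ≤ ∫ x in S, M * u x := by
        refine setIntegral_mono_on hI.integrableOn (hiu.const_mul M) hS ?_
        intro x hx
        exact (mul_le_mul_of_nonneg_left (hmω x hx) (hu0 x)).trans_eq (mul_comm _ _)
    _ = M * ∫ x in S, u x := by rw [integral_const_mul]
lemma covering {l : ℝ} (hl : 0 < l) {h : ℝ → ℝ} (hhI : Integrable h) :
    HasSum (fun i : ℤ => ∫ x in dil 1 ((i:ℝ)*l + l/2) l, h x) (∫ x, h x) := by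
  set s : ℤ → Set ℝ := fun i => Ico ((i:ℝ)*l) ((i:ℝ)*l + l) with hs
  have hm : ∀ i, MeasurableSet (s i) := fun i => measurableSet_Ico
  have hd : Pairwise (Function.onFun Disjoint s) := by
    intro i j hij
    simp only [Function.onFun, hs]
    rw [Set.Ico_disjoint_Ico]
    rcases lt_or_gt_of_ne hij with hlt | hlt
    · have : (i:ℝ) + 1 ≤ (j:ℝ) := by exact_mod_cast hlt
      refine le_trans (min_le_left _ _) (le_trans ?_ (le_max_right _ _))
      nlinarith
    · have : (j:ℝ) + 1 ≤ (i:ℝ) := by exact_mod_cast hlt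
      refine le_trans (min_le_right _ _) (le_trans ?_ (le_max_left _ _))
      nlinarith
  have hunion : (⋃ i : ℤ, s i) = Set.univ := by
    ext x
    simp only [Set.mem_iUnion, Set.mem_univ, iff_true, hs, Set.mem_Ico]
    refine ⟨⌊x/l⌋, ?_, ?_⟩
    · calc ((⌊x/l⌋:ℝ)) * l ≤ (x/l) * l := by
            exact mul_le_mul_of_nonneg_right (Int.floor_le _) (le_of_lt hl)
        _ = x := by field_simp
    · have h2 : x/l < ⌊x/l⌋ + 1 := Int.lt_floor_add_one _
      calc x = (x/l) * l := by field_simp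
        _ < ((⌊x/l⌋:ℝ) + 1) * l := by exact mul_lt_mul_of_pos_right h2 hl
        _ = (⌊x/l⌋:ℝ) * l + l := by ring
  have hHS := hasSum_integral_iUnion hm hd (by rw [hunion]; exact hhI.integrableOn)
  rw [hunion, setIntegral_univ] at hHS
  have heq : (fun i : ℤ => ∫ x in s i, h x)
      = (fun i : ℤ => ∫ x in dil 1 ((i:ℝ)*l + l/2) l, h x) := by
    funext i
    have h1 : dil 1 ((i:ℝ)*l + l/2) l = Icc ((i:ℝ)*l) ((i:ℝ)*l + l) := by
      simp only [dil]
      congr 1 <;> ring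
    rw [h1, hs]
    exact setIntegral_congr_set Ico_ae_eq_Icc
  rw [heq] at hHS
  exact hHS

/-- Weighted continuity: a bilinear operator `T` satisfying ``off-diagonal''
estimates at scale `l` and order `δ` is bounded from `L^p(ω) × L^q(ω)` into `L^r(ω)`
for every weight `ω ∈ P_θ(l)` with `0 ≤ θ < δ max{r,1}`. -/
theorem stmt13 (T : (ℝ → ℝ) → (ℝ → ℝ) → ℝ → ℝ)
    (p q r δ l θ C : ℝ)
    (hp : 1 < p) (hq : 1 < q) (hr0 : 0 < r) (hpqr : 1 / r = 1 / p + 1 / q)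
    (hδ : 0 < δ) (hl : 0 < l) (hθ0 : 0 ≤ θ) (hθδ : θ < δ * max r 1)
    (ω : ℝ → ℝ) (hωmeas : Measurable ω) (hω0 : ∀ x, 0 ≤ ω x) (hωP : memP θ l ω)
    (hT : ∀ (f g : ℝ → ℝ) (c : ℝ),
      (∫ x in dil 1 c l, |T f g x| ^ r) ^ (1 / r) ≤
        C * (∑' k : ℕ, (2:ℝ) ^ (-(k:ℝ) * (1 / p + δ)) *
              (∫ x in dil ((2:ℝ)^k) c l, |f x| ^ p) ^ (1 / p)) *
            (∑' k : ℕ, (2:ℝ) ^ (-(k:ℝ) * (1 / q + δ)) *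
              (∫ x in dil ((2:ℝ)^k) c l, |g x| ^ q) ^ (1 / q))) :
    ∃ C' : ℝ, ∀ f g : ℝ → ℝ, Measurable f → Measurable g → Measurable (T f g) →
      Integrable (fun x => |f x| ^ p * ω x) → Integrable (fun x => |g x| ^ q * ω x) →
      (∫ x, |T f g x| ^ r * ω x) ^ (1 / r) ≤
        C' * (∫ x, |f x| ^ p * ω x) ^ (1 / p) * (∫ x, |g x| ^ q * ω x) ^ (1 / q) := by
  obtain ⟨C0, hC0⟩ := hωP
  have hCw1 : (1:ℝ) ≤ max C0 1 := le_max_right _ _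
  set Cw := max C0 1 with hCwdef
  have hCw0 : (0:ℝ) < Cw := lt_of_lt_of_le one_pos hCw1
  have hCw : ∀ x y : ℝ, ω x ≤ Cw * (1 + |x - y| / l) ^ θ * ω y := by
    intro x y
    refine (hC0 x y).trans ?_
    have hb : (0:ℝ) ≤ (1 + |x - y| / l) ^ θ := by
      apply Real.rpow_nonneg
      positivity
    exact mul_le_mul_of_nonneg_right
      (mul_le_mul_of_nonneg_right (le_max_left C0 1) hb) (hω0 y)
  by_cases hdeg : ∃ x0, ω x0 = 0
  · obtain ⟨x0, hx0⟩ := hdeg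
    have hz : ∀ x, ω x = 0 := by
      intro x
      refine le_antisymm ?_ (hω0 x)
      have h := hCw x x0
      rwa [hx0, mul_zero] at h
    refine ⟨0, fun f g _ _ _ _ _ => ?_⟩
    simp only [hz, mul_zero, integral_zero]
    rw [Real.zero_rpow (one_div_ne_zero (ne_of_gt hr0)), zero_mul, zero_mul]
  push_neg at hdeg
  have hpos : ∀ x, 0 < ω x := fun x => (hω0 x).lt_of_ne (Ne.symm (hdeg x))
  have hp0 : 0 < p := one_pos.trans hp
  have hq0 : 0 < q := one_pos.trans hq
  have hrne : r ≠ 0 := ne_of_gt hr0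
  have hrp : r < p := by
    by_contra hcon
    push_neg at hcon
    have h1 : 1/r ≤ 1/p := one_div_le_one_div_of_le hp0 hcon
    have h2 : 0 < 1/q := by positivity
    rw [hpqr] at h1
    linarith
  have hrq : r < q := by
    by_contra hcon
    push_neg at hcon
    have h1 : 1/r ≤ 1/q := one_div_le_one_div_of_le hq0 hcon
    have h2 : 0 < 1/p := by positivity
    rw [hpqr] at h1
    linarith
  have hθp : θ < δ * p := hθδ.trans (mul_lt_mul_of_pos_left (max_lt hrp hp) hδ)
  have hθq : θ < δ * q := hθδ.trans (mul_lt_mul_of_pos_left (max_lt hrq hq) hδ)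
  have hrpq1 : r/p + r/q = 1 := by
    have h1 : r/p + r/q = (1/p + 1/q) * r := by ring
    rw [h1, ← hpqr]
    field_simp
  -- weight comparison on dilated intervals
  have hcomp : ∀ (cc : ℝ) (k : ℕ), ∀ x ∈ dil ((2:ℝ)^k) cc l, ∀ y ∈ dil ((2:ℝ)^k) cc l,
      ω x ≤ (Cw * (2:ℝ)^(((k:ℝ)+1)*θ)) * ω y := by
    intro cc k x hx y hy
    simp only [dil, Set.mem_Icc] at hx hy
    have h2k1 : (1:ℝ) ≤ (2:ℝ)^k := one_le_pow₀ (by norm_num)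
    have habs : |x - y| ≤ (2:ℝ)^k * l := by
      rw [abs_sub_le_iff]
      constructor <;> linarith [hx.1, hx.2, hy.1, hy.2]
    have hfrac : 1 + |x - y|/l ≤ (2:ℝ)^(((k:ℝ)+1)) := by
      have hdiv : |x - y|/l ≤ (2:ℝ)^k := (div_le_iff₀ hl).mpr habs
      have h2 : (2:ℝ)^(((k:ℝ)+1)) = 2 * (2:ℝ)^k := by
        rw [Real.rpow_add two_pos, Real.rpow_one, Real.rpow_natCast]
        ring
      rw [h2]
      linarith
    have hrp1 : (1 + |x - y|/l)^θ ≤ (2:ℝ)^(((k:ℝ)+1)*θ) := by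
      rw [Real.rpow_mul (by norm_num : (0:ℝ) ≤ 2)]
      exact Real.rpow_le_rpow (by positivity) hfrac hθ0
    calc ω x ≤ Cw * (1 + |x - y|/l)^θ * ω y := hCw x y
      _ ≤ Cw * (2:ℝ)^(((k:ℝ)+1)*θ) * ω y :=
          mul_le_mul_of_nonneg_right (mul_le_mul_of_nonneg_left hrp1 hCw0.le) (hω0 y)
  have hcmem : ∀ (cc : ℝ) (k : ℕ), cc ∈ dil ((2:ℝ)^k) cc l := by
    intro cc k
    simp only [dil, Set.mem_Icc]
    have h0 : 0 ≤ (2:ℝ)^k * l / 2 := by positivity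
    constructor <;> linarith
  have hwlow : ∀ (i : ℤ) (k : ℕ), ∀ x ∈ dil ((2:ℝ)^k) ((i:ℝ)*l + l/2) l,
      (Cw * (2:ℝ)^(((k:ℝ)+1)*θ))⁻¹ * ω ((i:ℝ)*l + l/2) ≤ ω x := by
    intro i k x hx
    have h := hcomp _ k _ (hcmem _ k) x hx
    have hE : 0 < Cw * (2:ℝ)^(((k:ℝ)+1)*θ) := mul_pos hCw0 (two_rpow_pos _)
    calc (Cw * (2:ℝ)^(((k:ℝ)+1)*θ))⁻¹ * ω ((i:ℝ)*l + l/2)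
        ≤ (Cw * (2:ℝ)^(((k:ℝ)+1)*θ))⁻¹ * ((Cw * (2:ℝ)^(((k:ℝ)+1)*θ)) * ω x) :=
          mul_le_mul_of_nonneg_left h (by positivity)
      _ = ω x := by field_simp
  set KT := Cw * (2:ℝ)^θ * |C|^r * (sideD Cw θ p)^r * (sideD Cw θ q)^r with hKT
  have hDp0 : (0:ℝ) < sideD Cw θ p := sideD_pos hCw0
  have hDq0 : (0:ℝ) < sideD Cw θ q := sideD_pos hCw0
  have hKT0 : 0 ≤ KT := by
    rw [hKT]
    have h1 : (0:ℝ) ≤ |C|^r := Real.rpow_nonneg (abs_nonneg C) r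
    have h2 : (0:ℝ) ≤ (sideD Cw θ p)^r := Real.rpow_nonneg hDp0.le r
    have h3 : (0:ℝ) ≤ (sideD Cw θ q)^r := Real.rpow_nonneg hDq0.le r
    have h4 : (0:ℝ) < (2:ℝ)^θ := two_rpow_pos θ
    positivity
  refine ⟨KT^(1/r) * (sideK p δ θ)^(1/p) * (sideK q δ θ)^(1/q), ?_⟩
  intro f g hfm hgm hTm hfI hgI
  have hKp0 : 0 ≤ sideK p δ θ := sideK_nonneg p δ θ
  have hKq0 : 0 ≤ sideK q δ θ := sideK_nonneg q δ θ
  have hC'0 : 0 ≤ KT^(1/r) * (sideK p δ θ)^(1/p) * (sideK q δ θ)^(1/q) :=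
    mul_nonneg (mul_nonneg (Real.rpow_nonneg hKT0 _) (Real.rpow_nonneg hKp0 _))
      (Real.rpow_nonneg hKq0 _)
  have hA0 : 0 ≤ ∫ x, |f x|^p * ω x :=
    integral_nonneg (fun x => mul_nonneg (Real.rpow_nonneg (abs_nonneg _) _) (hω0 x))
  have hB0 : 0 ≤ ∫ x, |g x|^q * ω x :=
    integral_nonneg (fun x => mul_nonneg (Real.rpow_nonneg (abs_nonneg _) _) (hω0 x))
  by_cases hTint : Integrable (fun x => |T f g x|^r * ω x)
  swap
  · rw [integral_undef hTint, Real.zero_rpow (one_div_ne_zero hrne)]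
    exact mul_nonneg (mul_nonneg hC'0 (Real.rpow_nonneg hA0 _)) (Real.rpow_nonneg hB0 _)
  obtain ⟨P, hP0, hSfb, hPsum⟩ := side hp hδ hl hθ0 hθp hCw0 hω0 hpos hwlow hfm hfI
  obtain ⟨Q, hQ0, hSgb, hQsum⟩ := side hq hδ hl hθ0 hθq hCw0 hω0 hpos hwlow hgm hgI
  have hTr0 : ∀ x : ℝ, 0 ≤ |T f g x|^r := fun x => Real.rpow_nonneg (abs_nonneg _) _
  have hTrω0 : ∀ x : ℝ, 0 ≤ |T f g x|^r * ω x := fun x => mul_nonneg (hTr0 x) (hω0 x)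
  have hT_tot0 : 0 ≤ ∫ x, |T f g x|^r * ω x := integral_nonneg hTrω0
  have hIint : ∀ i : ℤ, IntegrableOn (fun x => |T f g x|^r) (dil 1 ((i:ℝ)*l + l/2) l) := by
    intro i
    have h0 : dil 1 ((i:ℝ)*l + l/2) l = dil ((2:ℝ)^(0:ℕ)) ((i:ℝ)*l + l/2) l := by
      norm_num [dil]
    rw [h0]
    exact (key_low (hTm.abs.pow measurable_const) hTr0 measurableSet_Icc
      (mul_pos (inv_pos.mpr (mul_pos hCw0 (two_rpow_pos _))) (hpos _)) (hwlow i 0) hTint).1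
  have hIup : ∀ i : ℤ, ∫ x in dil 1 ((i:ℝ)*l + l/2) l, |T f g x|^r * ω x
      ≤ (Cw * (2:ℝ)^θ * ω ((i:ℝ)*l + l/2)) * ∫ x in dil 1 ((i:ℝ)*l + l/2) l, |T f g x|^r := by
    intro i
    have h0 : dil 1 ((i:ℝ)*l + l/2) l = dil ((2:ℝ)^(0:ℕ)) ((i:ℝ)*l + l/2) l := by
      norm_num [dil]
    have hup : ∀ x ∈ dil 1 ((i:ℝ)*l + l/2) l, ω x ≤ Cw * (2:ℝ)^θ * ω ((i:ℝ)*l + l/2) := by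
      intro x hx
      rw [h0] at hx
      have h := hcomp _ 0 x hx _ (hcmem _ 0)
      have h1 : (((0:ℕ):ℝ)+1)*θ = θ := by norm_num
      rwa [h1] at h
    exact key_up hTr0 measurableSet_Icc
      (mul_nonneg (mul_nonneg hCw0.le (two_rpow_pos θ).le) (hω0 _)) hup hTint (hIint i)
  -- abstract per-interval combination
  have main : ∀ (X Sf Sg wI PP QQ Y : ℝ),
      X ^ (1/r) ≤ C * Sf * Sg →
      Sf ≤ sideD Cw θ p * (wI⁻¹)^(1/p) * PP →
      Sg ≤ sideD Cw θ q * (wI⁻¹)^(1/q) * QQ →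
      Y ≤ (Cw * (2:ℝ)^θ * wI) * X →
      0 ≤ X → 0 ≤ Sf → 0 ≤ Sg → 0 < wI → 0 ≤ PP → 0 ≤ QQ →
      Y ≤ KT * PP^r * QQ^r := by
    intro X Sf Sg wI PP QQ Y hhT hfb hgb hY hX0 hSf0 hSg0 hwI0 hPP0 hQQ0
    have hv0 : (0:ℝ) ≤ wI⁻¹ := (inv_pos.mpr hwI0).le
    have hvp0 : (0:ℝ) ≤ (wI⁻¹)^(1/p) := Real.rpow_nonneg hv0 _
    have hvq0 : (0:ℝ) ≤ (wI⁻¹)^(1/q) := Real.rpow_nonneg hv0 _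
    have h1 : X ≤ (|C| * Sf * Sg)^r := by
      have h2 : X = (X^(1/r))^r := (rpow_cancel hX0 hrne).symm
      rw [h2]
      refine Real.rpow_le_rpow (Real.rpow_nonneg hX0 _) ?_ hr0.le
      exact hhT.trans (mul_le_mul_of_nonneg_right
        (mul_le_mul_of_nonneg_right (le_abs_self C) hSf0) hSg0)
    have h3 : (|C| * Sf * Sg)^r
        ≤ (|C| * (sideD Cw θ p * (wI⁻¹)^(1/p) * PP) * (sideD Cw θ q * (wI⁻¹)^(1/q) * QQ))^r := by
      refine Real.rpow_le_rpow (by positivity) ?_ hr0.le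
      refine mul_le_mul (mul_le_mul_of_nonneg_left hfb (abs_nonneg C)) hgb hSg0 ?_
      exact mul_nonneg (abs_nonneg C) (hSf0.trans hfb)
    have hexp : (|C| * (sideD Cw θ p * (wI⁻¹)^(1/p) * PP) * (sideD Cw θ q * (wI⁻¹)^(1/q) * QQ))^r
        = |C|^r * ((sideD Cw θ p)^r * ((wI⁻¹)^(1/p))^r * PP^r) *
          ((sideD Cw θ q)^r * ((wI⁻¹)^(1/q))^r * QQ^r) := by
      rw [mul_rpow3 (abs_nonneg C)
        (mul_nonneg (mul_nonneg hDp0.le hvp0) hPP0)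
        (mul_nonneg (mul_nonneg hDq0.le hvq0) hQQ0),
        mul_rpow3 hDp0.le hvp0 hPP0, mul_rpow3 hDq0.le hvq0 hQQ0]
    have hcan : ((wI⁻¹)^(1/p))^r * ((wI⁻¹)^(1/q))^r = wI⁻¹ := by
      rw [← Real.rpow_mul hv0, ← Real.rpow_mul hv0, ← Real.rpow_add (inv_pos.mpr hwI0)]
      have he : 1/p * r + 1/q * r = 1 := by
        have h4 : 1/p*r + 1/q*r = r/p + r/q := by ring
        rw [h4, hrpq1]
      rw [he, Real.rpow_one]
    calc Y ≤ (Cw * (2:ℝ)^θ * wI) * X := hY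
      _ ≤ (Cw * (2:ℝ)^θ * wI) *
          (|C| * (sideD Cw θ p * (wI⁻¹)^(1/p) * PP) * (sideD Cw θ q * (wI⁻¹)^(1/q) * QQ))^r := by
          exact mul_le_mul_of_nonneg_left (h1.trans h3)
            (mul_nonneg (mul_nonneg hCw0.le (two_rpow_pos θ).le) hwI0.le)
      _ = KT * PP^r * QQ^r * (wI * (((wI⁻¹)^(1/p))^r * ((wI⁻¹)^(1/q))^r)) := by
          rw [hexp, hKT]; ring
      _ = KT * PP^r * QQ^r := by
          rw [hcan, mul_inv_cancel₀ (ne_of_gt hwI0), mul_one]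
  have hperI : ∀ i : ℤ, ∫ x in dil 1 ((i:ℝ)*l + l/2) l, |T f g x|^r * ω x
      ≤ KT * (P i)^r * (Q i)^r := by
    intro i
    refine main _ _ _ _ _ _ _ (hT f g ((i:ℝ)*l + l/2)) (hSfb i) (hSgb i) (hIup i)
      ?_ ?_ ?_ (hpos _) (hP0 i) (hQ0 i)
    · exact setIntegral_nonneg measurableSet_Icc (fun x _ => hTr0 x)
    · exact tsum_nonneg fun k => mul_nonneg (two_rpow_pos _).le
        (Real.rpow_nonneg (setIntegral_nonneg measurableSet_Icc
          (fun x _ => Real.rpow_nonneg (abs_nonneg _) _)) _)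
    · exact tsum_nonneg fun k => mul_nonneg (two_rpow_pos _).le
        (Real.rpow_nonneg (setIntegral_nonneg measurableSet_Icc
          (fun x _ => Real.rpow_nonneg (abs_nonneg _) _)) _)
  have hHS : HasSum (fun i : ℤ => ∫ x in dil 1 ((i:ℝ)*l + l/2) l, |T f g x|^r * ω x)
      (∫ x, |T f g x|^r * ω x) := covering hl hTint
  have hconjr : (p/r).HolderConjugate (q/r) := by
    refine Real.holderConjugate_iff.mpr ⟨(one_lt_div hr0).mpr hrp, ?_⟩
    rw [inv_div, inv_div]
    exact hrpq1
  have hsum_bound : ∀ s : Finset ℤ,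
      ∑ i ∈ s, ∫ x in dil 1 ((i:ℝ)*l + l/2) l, |T f g x|^r * ω x
      ≤ KT * ((sideK p δ θ * ∫ x, |f x|^p * ω x)^(r/p) *
              (sideK q δ θ * ∫ x, |g x|^q * ω x)^(r/q)) := by
    intro s
    have hH : ∑ i ∈ s, (P i)^r * (Q i)^r
        ≤ (∑ i ∈ s, (P i)^p)^(r/p) * (∑ i ∈ s, (Q i)^q)^(r/q) := by
      have h := Real.inner_le_Lp_mul_Lq_of_nonneg (s := s)
        (f := fun i => (P i)^r) (g := fun i => (Q i)^r) hconjr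
        (fun i _ => Real.rpow_nonneg (hP0 i) r) (fun i _ => Real.rpow_nonneg (hQ0 i) r)
      have e1 : ∀ i : ℤ, ((P i)^r)^(p/r) = (P i)^p := by
        intro i
        rw [← Real.rpow_mul (hP0 i)]
        congr 1
        field_simp
      have e2 : ∀ i : ℤ, ((Q i)^r)^(q/r) = (Q i)^q := by
        intro i
        rw [← Real.rpow_mul (hQ0 i)]
        congr 1
        field_simp
      simp only [e1, e2, one_div_div] at h
      exact h
    calc ∑ i ∈ s, ∫ x in dil 1 ((i:ℝ)*l + l/2) l, |T f g x|^r * ω x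
        ≤ ∑ i ∈ s, KT * (P i)^r * (Q i)^r := Finset.sum_le_sum fun i _ => hperI i
      _ = KT * ∑ i ∈ s, (P i)^r * (Q i)^r := by
          rw [Finset.mul_sum]
          exact Finset.sum_congr rfl fun i _ => by ring
      _ ≤ KT * ((∑ i ∈ s, (P i)^p)^(r/p) * (∑ i ∈ s, (Q i)^q)^(r/q)) :=
          mul_le_mul_of_nonneg_left hH hKT0
      _ ≤ KT * ((sideK p δ θ * ∫ x, |f x|^p * ω x)^(r/p) *
              (sideK q δ θ * ∫ x, |g x|^q * ω x)^(r/q)) := by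
          refine mul_le_mul_of_nonneg_left (mul_le_mul ?_ ?_ ?_ ?_) hKT0
          · exact Real.rpow_le_rpow (Finset.sum_nonneg fun i _ => Real.rpow_nonneg (hP0 i) p)
              (hPsum s) (by positivity)
          · exact Real.rpow_le_rpow (Finset.sum_nonneg fun i _ => Real.rpow_nonneg (hQ0 i) q)
              (hQsum s) (by positivity)
          · exact Real.rpow_nonneg (Finset.sum_nonneg fun i _ => Real.rpow_nonneg (hQ0 i) q) _
          · exact Real.rpow_nonneg (mul_nonneg hKp0 hA0) _
  have htot : ∫ x, |T f g x|^r * ω x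
      ≤ KT * ((sideK p δ θ * ∫ x, |f x|^p * ω x)^(r/p) *
              (sideK q δ θ * ∫ x, |g x|^q * ω x)^(r/q)) :=
    hasSum_le_of_sum_le hHS hsum_bound
  have hXf0 : 0 ≤ (sideK p δ θ * ∫ x, |f x|^p * ω x)^(r/p) :=
    Real.rpow_nonneg (mul_nonneg hKp0 hA0) _
  have hXg0 : 0 ≤ (sideK q δ θ * ∫ x, |g x|^q * ω x)^(r/q) :=
    Real.rpow_nonneg (mul_nonneg hKq0 hB0) _
  have e1 : ((sideK p δ θ * ∫ x, |f x|^p * ω x)^(r/p))^(1/r)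
      = (sideK p δ θ)^(1/p) * (∫ x, |f x|^p * ω x)^(1/p) := by
    rw [← Real.rpow_mul (mul_nonneg hKp0 hA0)]
    rw [show (r/p) * (1/r) = 1/p by field_simp]
    rw [Real.mul_rpow hKp0 hA0]
  have e2 : ((sideK q δ θ * ∫ x, |g x|^q * ω x)^(r/q))^(1/r)
      = (sideK q δ θ)^(1/q) * (∫ x, |g x|^q * ω x)^(1/q) := by
    rw [← Real.rpow_mul (mul_nonneg hKq0 hB0)]
    rw [show (r/q) * (1/r) = 1/q by field_simp]
    rw [Real.mul_rpow hKq0 hB0]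
  calc (∫ x, |T f g x|^r * ω x)^(1/r)
      ≤ (KT * ((sideK p δ θ * ∫ x, |f x|^p * ω x)^(r/p) *
          (sideK q δ θ * ∫ x, |g x|^q * ω x)^(r/q)))^(1/r) :=
        Real.rpow_le_rpow hT_tot0 htot (by positivity)
    _ = KT^(1/r) * ((sideK p δ θ * ∫ x, |f x|^p * ω x)^(r/p))^(1/r) *
          ((sideK q δ θ * ∫ x, |g x|^q * ω x)^(r/q))^(1/r) := by
        rw [← mul_assoc, mul_rpow3 hKT0 hXf0 hXg0]
    _ = KT^(1/r) * ((sideK p δ θ)^(1/p) * (∫ x, |f x|^p * ω x)^(1/p)) *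
          ((sideK q δ θ)^(1/q) * (∫ x, |g x|^q * ω x)^(1/q)) := by rw [e1, e2]
    _ = KT^(1/r) * (sideK p δ θ)^(1/p) * (sideK q δ θ)^(1/q) *
          (∫ x, |f x|^p * ω x)^(1/p) * (∫ x, |g x|^q * ω x)^(1/q) := by ring
end
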